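/- arXiv:2408.15571 — 2 statements merged into one kernel-verified Lean document; each statement's English description precedes it below -/
import Mathlib

section
/- For every integer $n \ge 1$ and real $\phi$ with $0 < \phi < \pi$, the sequence $r_n$ defined by the recurrence $2 r_n r_{n-1} + 2\cos\phi = \frac{1-r_n^2}{r_n}\big((n+1) r_{n+1} + (n-1) r_{n-1}\big) - \frac{1-r_{n-1}^2}{r_{n-1}}\big(n r_n + (n-2) r_{n-2}\big)$, viewed with $r_n = r_n(\xi)$ depending analytically on a parameter $\xi$ near $0$ with initial data $r_{-1}=0$, $r_0 = 1$, $r_1 = \xi \sin\phi/(\pi - \xi\phi)$, has first-order Taylor coefficient $R_{n,1} = \frac{\sin n\phi}{n\pi}$ for $n \ge 1$, i.e., $r_n(\xi) = \delta_{n,0} + \frac{\sin n\phi}{n\pi}\xi + O(\xi^2)$. -/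
open Real Filter Topology

/-!
Summing the recurrence from `1` to `m` telescopes it (the `m = 0` term vanishes as `r₀ = 1`) to
`(1 - rₘ²)((m+1) rₘ₊₁ + (m-1) rₘ₋₁) / rₘ = 2m cos φ + 2 ∑ₖ₌₁ᵐ rₖ rₖ₋₁ =: Gₘ` near `ξ = 0`.
As long as `rₖ(0) = 0` for `1 ≤ k ≤ m`, `Gₘ'(0) = 2 r₁'(0) = 2 sin φ / π ≠ 0`, so `Gₘ`, hence `rₘ`,
has no zeros on a punctured neighbourhood of `0`, and by the identity theorem
`(1 - rₘ²)((m+1) rₘ₊₁ + (m-1) rₘ₋₁) = rₘ Gₘ` holds on a full neighbourhood.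
At `ξ = 0` this gives `rₘ₊₁(0) = 0`; differentiating at `0` shows that `sₘ = m rₘ'(0)` satisfies
`sₘ₊₁ = 2 cos φ sₘ - sₘ₋₁`, the recurrence of `sin (m φ)`, with `s₀ = 0` and `s₁ = sin φ / π`.
-/

theorem AnalyticAt.isBigO_sub_sub_deriv_mul {f : ℝ → ℝ} (hf : AnalyticAt ℝ f 0) :
    (fun ξ => f ξ - f 0 - deriv f 0 * ξ) =O[𝓝 0] fun ξ => ξ ^ 2 := by
  obtain ⟨p, hp⟩ := hf
  have hpartial : ∀ ξ, p.partialSum 2 ξ = f 0 + deriv f 0 * ξ := by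
    intro ξ
    simp [FormalMultilinearSeries.partialSum, Finset.sum_range_succ, hp.deriv, mul_comm,
      show p.coeff 0 = f 0 from hp.coeff_zero 1]
  simpa [hpartial, sub_sub, sq_abs] using hp.isBigO_sub_partialSum_pow 2

theorem AnalyticAt.eventually_eq_mul_of_div_eq {𝕜 : Type*} [NontriviallyNormedField 𝕜]
    [CompleteSpace 𝕜] {F u G : 𝕜 → 𝕜} {x d : 𝕜}
    (hF : AnalyticAt 𝕜 F x) (hu : AnalyticAt 𝕜 u x) (hG : AnalyticAt 𝕜 G x)
    (hGd : HasDerivAt G d x) (hd : d ≠ 0) (h : ∀ᶠ ξ in 𝓝[≠] x, F ξ / u ξ = G ξ) :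
    ∀ᶠ ξ in 𝓝 x, F ξ = u ξ * G ξ := by
  refine (hF.frequently_eq_iff_eventually_eq (hu.fun_mul hG)).mp (Eventually.frequently ?_)
  filter_upwards [h, hGd.eventually_ne (c := 0) hd] with ξ hξ hGξ
  have huξ : u ξ ≠ 0 := fun hu0 => hGξ (by simp [← hξ, hu0])
  rw [← hξ, mul_div_cancel₀ _ huξ]

theorem eq_mul_sin_of_recurrence {s : ℤ → ℝ} {a θ : ℝ} (h0 : s 0 = 0) (h1 : s 1 = a * sin θ)
    (hs : ∀ m, 1 ≤ m → s (m + 1) = 2 * cos θ * s m - s (m - 1)) :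
    ∀ m, 0 ≤ m → s m = a * sin (m * θ) := by
  suffices ∀ m, 0 ≤ m → s m = a * sin (m * θ) ∧ s (m + 1) = a * sin ((m + 1 : ℤ) * θ) from
    fun m hm => (this m hm).1
  refine Int.leInduction (by simp [h0, h1]) fun m hm ⟨hm0, hm1⟩ => ⟨hm1, ?_⟩
  rw [hs (m + 1) (by omega), add_sub_cancel_right, hm0, hm1]
  push_cast
  rw [show (m + 1 + 1) * θ = (m + 1) * θ + θ by ring, show m * θ = (m + 1) * θ - θ by ring,
    sin_add, sin_sub]
  ring

theorem hasDerivAt_mul_div_sub_mul {a b c : ℝ} (hb : b ≠ 0) :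
    HasDerivAt (fun ξ => ξ * a / (b - ξ * c)) (a / b) 0 := by
  have h := ((hasDerivAt_id' 0).mul_const a).fun_div (((hasDerivAt_id' 0).mul_const c).const_sub b)
    (by simpa using hb)
  refine h.congr_deriv ?_
  simp
  field_simp

namespace DiscretePainleveV

variable {φ : ℝ} {r : ℤ → ℝ → ℝ} {m : ℤ}

noncomputable def telescopedSum (φ : ℝ) (r : ℤ → ℝ → ℝ) (m : ℤ) (ξ : ℝ) : ℝ :=
  2 * m * cos φ + 2 * ∑ k ∈ Finset.Icc 1 m, r k ξ * r (k - 1) ξ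

noncomputable def numerator (r : ℤ → ℝ → ℝ) (m : ℤ) (ξ : ℝ) : ℝ :=
  (1 - r m ξ ^ 2) * ((m + 1) * r (m + 1) ξ + (m - 1) * r (m - 1) ξ)

theorem eventually_numerator_div_eq_telescopedSum {l : Filter ℝ}
    (hrec : ∀ n : ℤ, 1 ≤ n → ∀ᶠ ξ in l,
      2 * r n ξ * r (n - 1) ξ + 2 * Real.cos φ
        = (1 - (r n ξ) ^ 2) / r n ξ * ((n + 1) * r (n + 1) ξ + (n - 1) * r (n - 1) ξ)
          - (1 - (r (n - 1) ξ) ^ 2) / r (n - 1) ξ * (n * r n ξ + (n - 2) * r (n - 2) ξ))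
    (h0 : ∀ ξ, r 0 ξ = 1) (hm : 1 ≤ m) :
    ∀ᶠ ξ in l, numerator r m ξ / r m ξ = telescopedSum φ r m ξ := by
  simp only [numerator, ← div_mul_eq_mul_div]
  induction m, hm using Int.leInduction with
  | base =>
    filter_upwards [hrec 1 le_rfl] with ξ hξ
    norm_num [telescopedSum, h0] at hξ ⊢
    linear_combination -hξ
  | succ n hn ih =>
    filter_upwards [hrec (n + 1) (by omega), ih] with ξ hrecξ ihξ
    rw [telescopedSum, ← Finset.insert_Icc_right_eq_Icc_add_one (by omega),
      Finset.sum_insert (by simp), add_sub_cancel_right]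
    rw [add_sub_cancel_right, show n + 1 - 2 = n - 1 by ring] at hrecξ
    push_cast at hrecξ ⊢
    rw [telescopedSum] at ihξ
    linear_combination ihξ - hrecξ

theorem analyticAt_telescopedSum (hr : ∀ n, AnalyticAt ℝ (r n) 0) :
    AnalyticAt ℝ (telescopedSum φ r m) 0 :=
  analyticAt_const.add <| analyticAt_const.mul <|
    Finset.analyticAt_fun_sum _ fun k _ => (hr k).fun_mul (hr (k - 1))

theorem telescopedSum_zero (hvals : ∀ k, 1 ≤ k → k ≤ m → r k 0 = 0) :
    telescopedSum φ r m 0 = 2 * m * cos φ := by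
  rw [telescopedSum, Finset.sum_eq_zero fun k hk => ?_, mul_zero, add_zero]
  rw [Finset.mem_Icc] at hk
  rw [hvals k hk.1 hk.2, zero_mul]

theorem hasDerivAt_telescopedSum (hr : ∀ n, DifferentiableAt ℝ (r n) 0) (h0 : r 0 0 = 1)
    (hm : 1 ≤ m) (hvals : ∀ k, 1 ≤ k → k ≤ m → r k 0 = 0) :
    HasDerivAt (telescopedSum φ r m) (2 * deriv (r 1) 0) 0 := by
  have hsum := HasDerivAt.fun_sum (u := Finset.Icc 1 m)
    fun k _ => (hr k).hasDerivAt.mul (hr (k - 1)).hasDerivAt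
  refine ((hsum.const_mul 2).const_add (2 * m * cos φ)).congr_deriv ?_
  rw [Finset.sum_eq_single_of_mem 1 (by simp [hm]) fun k hk hk1 => ?_]
  · simp [h0, hvals 1 le_rfl hm]
  rw [Finset.mem_Icc] at hk
  rw [hvals k hk.1 hk.2, hvals (k - 1) (by omega) (by omega), zero_mul, mul_zero, add_zero]

theorem numerator_eventually_eq_mul_telescopedSum (hr : ∀ n, AnalyticAt ℝ (r n) 0)
    (htel : ∀ᶠ ξ in 𝓝[≠] 0, numerator r m ξ / r m ξ = telescopedSum φ r m ξ)
    (h0 : r 0 0 = 1) (hd1 : deriv (r 1) 0 ≠ 0) (hm : 1 ≤ m)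
    (hvals : ∀ k, 1 ≤ k → k ≤ m → r k 0 = 0) :
    ∀ᶠ ξ in 𝓝 0, numerator r m ξ = r m ξ * telescopedSum φ r m ξ := by
  have hnum : AnalyticAt ℝ (numerator r m) 0 := by unfold numerator; fun_prop
  exact hnum.eventually_eq_mul_of_div_eq (hr m) (analyticAt_telescopedSum hr)
    (hasDerivAt_telescopedSum (fun n => (hr n).differentiableAt) h0 hm hvals)
    (mul_ne_zero two_ne_zero hd1) htel

theorem hasDerivAt_numerator (hr : ∀ n, DifferentiableAt ℝ (r n) 0) (hm : r m 0 = 0) :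
    HasDerivAt (numerator r m)
      ((m + 1) * deriv (r (m + 1)) 0 + (m - 1) * deriv (r (m - 1)) 0) 0 := by
  have h := (((hr m).hasDerivAt.pow 2).const_sub 1).mul
    (((hr (m + 1)).hasDerivAt.const_mul ((m : ℝ) + 1)).add
      ((hr (m - 1)).hasDerivAt.const_mul ((m : ℝ) - 1)))
  refine h.congr_deriv ?_
  simp [hm]

theorem apply_zero_eq_zero (hr : ∀ n, AnalyticAt ℝ (r n) 0)
    (htel : ∀ m, 1 ≤ m → ∀ᶠ ξ in 𝓝[≠] 0, numerator r m ξ / r m ξ = telescopedSum φ r m ξ)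
    (h0 : r 0 0 = 1) (h1 : r 1 0 = 0) (hd1 : deriv (r 1) 0 ≠ 0) (hm : 1 ≤ m) : r m 0 = 0 := by
  suffices ∀ m, 1 ≤ m → ∀ k, 1 ≤ k → k ≤ m → r k 0 = 0 from this m hm m hm le_rfl
  refine Int.leInduction (fun k hk hk1 => by rwa [le_antisymm hk1 hk]) ?_
  intro m hm hvals k hk hkm
  rcases Int.le_add_one_iff.mp hkm with hkm | rfl
  · exact hvals k hk hkm
  have hnum := (numerator_eventually_eq_mul_telescopedSum hr (htel m hm) h0 hd1 hm
    hvals).self_of_nhds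
  have hprev : ((m : ℝ) - 1) * r (m - 1) 0 = 0 := by
    rcases hm.eq_or_lt with rfl | hm
    · simp
    · rw [hvals (m - 1) (by omega) (by omega), mul_zero]
  have hm' : (m : ℝ) + 1 ≠ 0 := by positivity
  simpa [numerator, hvals m hm le_rfl, hprev, hm'] using hnum

theorem deriv_recurrence (hr : ∀ n, AnalyticAt ℝ (r n) 0)
    (htel : ∀ m, 1 ≤ m → ∀ᶠ ξ in 𝓝[≠] 0, numerator r m ξ / r m ξ = telescopedSum φ r m ξ)
    (h0 : r 0 0 = 1) (h1 : r 1 0 = 0) (hd1 : deriv (r 1) 0 ≠ 0) (hm : 1 ≤ m) :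
    ((m + 1 : ℤ) : ℝ) * deriv (r (m + 1)) 0
      = 2 * cos φ * (m * deriv (r m) 0) - ((m - 1 : ℤ) : ℝ) * deriv (r (m - 1)) 0 := by
  have hvals : ∀ k, 1 ≤ k → k ≤ m → r k 0 = 0 := fun k hk _ =>
    apply_zero_eq_zero hr htel h0 h1 hd1 hk
  have hdiff n := (hr n).differentiableAt
  have heq := numerator_eventually_eq_mul_telescopedSum hr (htel m hm) h0 hd1 hm hvals
  have hprod := (hdiff m).hasDerivAt.mul (hasDerivAt_telescopedSum (φ := φ) hdiff h0 hm hvals)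
  have h := (hasDerivAt_numerator hdiff (hvals m hm le_rfl)).unique
    (hprod.congr_of_eventuallyEq heq)
  rw [telescopedSum_zero hvals, hvals m hm le_rfl] at h
  push_cast
  linear_combination h

end DiscretePainleveV

open DiscretePainleveV in
theorem dPV_first_taylor_coefficient_general (φ : ℝ) (hφ : 0 < φ) (hφπ : φ < π)
    (r : ℤ → ℝ → ℝ)
    (hanalytic : ∀ n : ℤ, AnalyticAt ℝ (r n) 0)
    (hrec : ∀ n : ℤ, 1 ≤ n → ∀ᶠ ξ in 𝓝[≠] (0 : ℝ),
      2 * r n ξ * r (n - 1) ξ + 2 * Real.cos φ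
        = (1 - (r n ξ) ^ 2) / r n ξ * ((n + 1) * r (n + 1) ξ + (n - 1) * r (n - 1) ξ)
          - (1 - (r (n - 1) ξ) ^ 2) / r (n - 1) ξ * (n * r n ξ + (n - 2) * r (n - 2) ξ))
    (h0 : ∀ ξ : ℝ, r 0 ξ = 1)
    (h1 : ∀ ξ : ℝ, r 1 ξ = ξ * Real.sin φ / (π - ξ * φ)) :
    ∀ n : ℤ, 1 ≤ n →
      r n 0 = 0 ∧
      (fun ξ : ℝ => r n ξ - Real.sin (n * φ) / (n * π) * ξ) =O[𝓝 (0 : ℝ)]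
        (fun ξ => ξ ^ 2) := by
  intro n hn
  have hd1 : deriv (r 1) 0 = sin φ / π := by
    rw [funext h1]
    exact (hasDerivAt_mul_div_sub_mul pi_ne_zero).deriv
  have hd1_ne : deriv (r 1) 0 ≠ 0 := by
    rw [hd1]
    exact (div_pos (sin_pos_of_pos_of_lt_pi hφ hφπ) pi_pos).ne'
  have htel m (hm : 1 ≤ m) := eventually_numerator_div_eq_telescopedSum (φ := φ) hrec h0 hm
  have hr10 : r 1 0 = 0 := by simp [h1]
  have hrn0 := apply_zero_eq_zero hanalytic htel (h0 0) hr10 hd1_ne hn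
  have hsin := eq_mul_sin_of_recurrence (s := fun k => k * deriv (r k) 0) (a := π⁻¹) (by simp)
    (by simp [hd1, div_eq_inv_mul])
    (fun m hm => deriv_recurrence hanalytic htel (h0 0) hr10 hd1_ne hm) n (by omega)
  have hderiv : deriv (r n) 0 = sin (n * φ) / (n * π) := by
    rw [eq_div_iff (by positivity), ← mul_assoc, mul_comm _ (n : ℝ), hsin]
    field_simp
  refine ⟨hrn0, ?_⟩
  simpa [hrn0, hderiv] using (hanalytic n).isBigO_sub_sub_deriv_mul

/-- Linearization at `ξ = 0` of the discrete Painlevé V recurrence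
`2 rₙ rₙ₋₁ + 2cos φ = ((1-rₙ²)/rₙ)((n+1)rₙ₊₁ + (n-1)rₙ₋₁)
  - ((1-rₙ₋₁²)/rₙ₋₁)(n rₙ + (n-2)rₙ₋₂)`
with initial data `r₋₁ = 0`, `r₀ = 1`, `r₁ = ξ sin φ/(π - ξφ)`:
for `n ≥ 1` the first Taylor coefficient of `ξ ↦ rₙ(ξ)` at `0` is
`R_{n,1} = sin(nφ)/(nπ)`, i.e. `rₙ(ξ) = δ_{n,0} + (sin(nφ)/(nπ))ξ + O(ξ²)`. -/
theorem dPV_first_taylor_coefficient (φ : ℝ) (hφ : 0 < φ) (hφπ : φ < π)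
    (r : ℤ → ℝ → ℝ)
    (hanalytic : ∀ n : ℤ, AnalyticAt ℝ (r n) 0)
    (hrec : ∀ n : ℤ, 1 ≤ n → ∀ᶠ ξ in 𝓝[≠] (0 : ℝ),
      2 * r n ξ * r (n - 1) ξ + 2 * Real.cos φ
        = (1 - (r n ξ) ^ 2) / r n ξ * ((n + 1) * r (n + 1) ξ + (n - 1) * r (n - 1) ξ)
          - (1 - (r (n - 1) ξ) ^ 2) / r (n - 1) ξ * (n * r n ξ + (n - 2) * r (n - 2) ξ))
    (hm1 : ∀ ξ : ℝ, r (-1) ξ = 0)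
    (h0 : ∀ ξ : ℝ, r 0 ξ = 1)
    (h1 : ∀ ξ : ℝ, r 1 ξ = ξ * Real.sin φ / (π - ξ * φ)) :
    ∀ n : ℤ, 1 ≤ n →
      r n 0 = 0 ∧
      (fun ξ : ℝ => r n ξ - Real.sin (n * φ) / (n * π) * ξ) =O[𝓝 (0 : ℝ)]
        (fun ξ => ξ ^ 2) :=
  dPV_first_taylor_coefficient_general φ hφ hφπ r hanalytic hrec h0 h1
end

section
/- Suppose $S_N(\omega) = \frac{2z}{(1-z)^2}\Big(-\mathrm{Re}\big(I_0(z) - (1-z^{-N})I_1(z)\big) + \frac{2}{N}\big(\mathrm{Re}(z^{-N/2}I_0(z))\big)^2\Big)$ with $z = e^{i\omega}$, where $I_q(z) = \frac{N}{2\pi}\int_0^\pi \big(\frac{\phi}{2\pi}\big)^q\, \mathcal{E}(\phi;\omega)\,d\phi$ and $\mathcal{E}(\phi;\omega) = 1 + i\omega\,\frac{N\phi}{2\pi} - \frac{\omega^2}{2} m_2(\phi) + O(\omega^3)$ uniformly in $\phi \in [0,\pi]$, with $m_2(\phi) \ge (N\phi/2\pi)^2$. Then $\lim_{\omega\to 0}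 S_N(\omega) = \frac{N}{2\pi}\int_0^\pi \Big(m_2(\phi) - \big(\tfrac{N\phi}{2\pi}\big)^2\Big)\,d\phi$, i.e., $S_N(0) = \frac{N}{2\pi}\int_0^\pi \mathrm{Var}\,\mathcal{N}_{(0,\phi)}\,d\phi$. -/
/-!
Every ingredient of `S_N` has an expansion `c₀ + c₁ ω + c₂ ω² + O(ω³)` at `ω = 0`: the moments
`I_q` inherit one from the uniform expansion of `𝓔`, and such expansions are stable under sums,
products, real parts and composition with `exp`. Carrying them through, the bracket of `S_N`
starts at order `ω²`, with coefficient `N³/48 - (N/4π) ∫ m₂`, while the prefactor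
`2z/(1-z)² = -1/(2 sin²(ω/2))` behaves like `-2/ω²`. So `S_N(ω)` tends to `-2` times that
coefficient, which is the claimed integral because `∫₀^π (Nφ/2π)² dφ = N²π/12`.
-/

open Real Filter Topology Complex intervalIntegral

open Asymptotics MeasureTheory

def HasSecondOrderExpansion (f : ℝ → ℂ) (c₀ c₁ c₂ : ℂ) : Prop :=
  (fun ω : ℝ => f ω - (c₀ + c₁ * ω + c₂ * (ω : ℂ) ^ 2)) =O[𝓝 0] fun ω => ω ^ 3

namespace HasSecondOrderExpansion

variable {f g : ℝ → ℂ} {a₀ a₁ a₂ b₀ b₁ b₂ : ℂ}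

theorem congr (h : HasSecondOrderExpansion f a₀ a₁ a₂) (hfg : ∀ ω, f ω = g ω)
    (h₀ : a₀ = b₀) (h₁ : a₁ = b₁) (h₂ : a₂ = b₂) : HasSecondOrderExpansion g b₀ b₁ b₂ := by
  subst h₀ h₁ h₂
  exact h.congr_left fun ω => by rw [hfg]

theorem add (hf : HasSecondOrderExpansion f a₀ a₁ a₂) (hg : HasSecondOrderExpansion g b₀ b₁ b₂) :
    HasSecondOrderExpansion (fun ω => f ω + g ω) (a₀ + b₀) (a₁ + b₁) (a₂ + b₂) :=
  (IsBigO.add hf hg).congr_left fun ω => by ring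

theorem const_mul (hf : HasSecondOrderExpansion f a₀ a₁ a₂) (c : ℂ) :
    HasSecondOrderExpansion (fun ω => c * f ω) (c * a₀) (c * a₁) (c * a₂) :=
  (IsBigO.const_mul_left hf c).congr_left fun ω => by ring

theorem neg (hf : HasSecondOrderExpansion f a₀ a₁ a₂) :
    HasSecondOrderExpansion (fun ω => -f ω) (-a₀) (-a₁) (-a₂) :=
  (hf.const_mul (-1)).congr (fun ω => by ring) (by ring) (by ring) (by ring)

theorem sub (hf : HasSecondOrderExpansion f a₀ a₁ a₂) (hg : HasSecondOrderExpansion g b₀ b₁ b₂) :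
    HasSecondOrderExpansion (fun ω => f ω - g ω) (a₀ - b₀) (a₁ - b₁) (a₂ - b₂) :=
  (hf.add hg.neg).congr (fun ω => by ring) (by ring) (by ring) (by ring)

theorem tendsto (hf : HasSecondOrderExpansion f a₀ a₁ a₂) : Tendsto f (𝓝 0) (𝓝 a₀) := by
  have hP : Tendsto (fun ω : ℝ => a₀ + a₁ * ω + a₂ * (ω : ℂ) ^ 2) (𝓝 0) (𝓝 a₀) := by
    simpa using (Continuous.tendsto (by fun_prop) 0 :
      Tendsto (fun ω : ℝ => a₀ + a₁ * ω + a₂ * (ω : ℂ) ^ 2) (𝓝 0) _)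
  have hR := IsBigO.trans_tendsto hf (by simpa using (continuous_pow 3).tendsto (0 : ℝ))
  simpa using hR.add hP

theorem mul (hf : HasSecondOrderExpansion f a₀ a₁ a₂) (hg : HasSecondOrderExpansion g b₀ b₁ b₂) :
    HasSecondOrderExpansion (fun ω => f ω * g ω) (a₀ * b₀) (a₀ * b₁ + a₁ * b₀)
      (a₀ * b₂ + a₁ * b₁ + a₂ * b₀) := by
  have hpoly (c₀ c₁ c₂ : ℂ) : (fun ω : ℝ => c₀ + c₁ * ω + c₂ * (ω : ℂ) ^ 2) =O[𝓝 0]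
      fun _ => (1 : ℝ) :=
    (Continuous.tendsto (by fun_prop) 0).isBigO_one ℝ
  -- With `P`, `Q` the quadratic parts of `f`, `g`: `f g - P Q = f (g - Q) + Q (f - P)`,
  -- and `P Q` differs from the claimed quadratic by `O(ω³)`.
  have hfg := ((hf.tendsto.isBigO_one ℝ).mul hg).add (IsBigO.mul (hpoly b₀ b₁ b₂) hf)
  have htail := (hpoly (a₁ * b₂ + a₂ * b₁) (a₂ * b₂) 0).mul
    (isBigO_of_le (𝓝 0) fun ω : ℝ => (by simp : ‖(ω : ℂ) ^ 3‖ ≤ ‖ω ^ 3‖))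
  refine IsBigO.congr_right ((hfg.add htail).congr_left fun ω => ?_) fun ω => one_mul _
  ring

theorem ofReal_re (hf : HasSecondOrderExpansion f a₀ a₁ a₂) :
    HasSecondOrderExpansion (fun ω => ((f ω).re : ℂ)) a₀.re a₁.re a₂.re := by
  refine (isBigO_of_le _ fun ω => ?_).trans hf
  have : ((f ω).re : ℂ) - (a₀.re + a₁.re * ω + a₂.re * (ω : ℂ) ^ 2)
      = ((f ω - (a₀ + a₁ * ω + a₂ * (ω : ℂ) ^ 2)).re : ℂ) := by
    simp [← Complex.ofReal_pow]
  rw [this, Complex.norm_real]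
  exact Complex.abs_re_le_norm _

theorem tendsto_re_div_sq {c : ℂ} (h : HasSecondOrderExpansion f 0 0 c) :
    Tendsto (fun ω => (f ω).re / ω ^ 2) (𝓝[≠] 0) (𝓝 c.re) := by
  have hinv : (fun ω : ℝ => ((ω : ℂ) ^ 2)⁻¹) =O[𝓝[≠] 0] fun ω => (ω ^ 2)⁻¹ :=
    isBigO_of_le _ fun ω => by simp
  have hO : (fun ω : ℝ => f ω / (ω : ℂ) ^ 2 - c) =O[𝓝[≠] 0] fun ω => ω := by
    refine ((IsBigO.mono h nhdsWithin_le_nhds).mul hinv).congr' ?_ ?_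
    · filter_upwards [self_mem_nhdsWithin] with ω (hω : ω ≠ 0)
      have : (ω : ℂ) ≠ 0 := by exact_mod_cast hω
      field_simp
      ring
    · filter_upwards [self_mem_nhdsWithin] with ω (hω : ω ≠ 0)
      field_simp
  have hc := tendsto_sub_nhds_zero_iff.mp
    (hO.trans_tendsto (tendsto_id.mono_left nhdsWithin_le_nhds))
  refine (Complex.continuous_re.tendsto c).comp hc |>.congr fun ω => ?_
  simp [← Complex.ofReal_pow, Complex.div_ofReal_re]

end HasSecondOrderExpansion

theorem hasSecondOrderExpansion_const (c : ℂ) : HasSecondOrderExpansion (fun _ => c) c 0 0 :=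
  (isBigO_zero _ _).congr_left fun ω => by ring

theorem hasSecondOrderExpansion_exp (c : ℂ) :
    HasSecondOrderExpansion (fun ω => Complex.exp (c * ω)) 1 c (c ^ 2 / 2) := by
  have hc : Tendsto (fun ω : ℝ => c * ω) (𝓝 0) (𝓝 0) := by
    simpa using (Continuous.tendsto (by fun_prop) 0 : Tendsto (fun ω : ℝ => c * ω) (𝓝 0) _)
  refine (((Complex.exp_sub_sum_range_isBigO_pow 3).comp_tendsto hc).congr_left
    fun ω => ?_).trans ?_
  · simp [Finset.sum_range_succ]
    ring
  · refine .of_bound (‖c‖ ^ 3) (.of_forall fun ω => ?_)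
    simp [mul_pow]

theorem hasSecondOrderExpansion_intervalIntegral {a b C : ℝ} {F : ℝ → ℝ → ℂ}
    {p₀ p₁ p₂ : ℝ → ℂ} (hF : ∀ ω, IntervalIntegrable (F · ω) volume a b)
    (hp₀ : IntervalIntegrable p₀ volume a b) (hp₁ : IntervalIntegrable p₁ volume a b)
    (hp₂ : IntervalIntegrable p₂ volume a b)
    (hC : ∀ φ ∈ Set.uIcc a b, ∀ ω : ℝ, |ω| ≤ 1 →
      ‖F φ ω - (p₀ φ + p₁ φ * ω + p₂ φ * (ω : ℂ) ^ 2)‖ ≤ C * |ω| ^ 3) :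
    HasSecondOrderExpansion (fun ω => ∫ φ in a..b, F φ ω)
      (∫ φ in a..b, p₀ φ) (∫ φ in a..b, p₁ φ) (∫ φ in a..b, p₂ φ) := by
  refine .of_bound (C * |b - a|) ?_
  filter_upwards [Metric.closedBall_mem_nhds (0 : ℝ) one_pos] with ω hω
  rw [Metric.mem_closedBall, dist_zero_right, Real.norm_eq_abs] at hω
  have hsplit : (∫ φ in a..b, F φ ω) - ((∫ φ in a..b, p₀ φ) + (∫ φ in a..b, p₁ φ) * ω
      + (∫ φ in a..b, p₂ φ) * (ω : ℂ) ^ 2)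
      = ∫ φ in a..b, (F φ ω - (p₀ φ + p₁ φ * ω + p₂ φ * (ω : ℂ) ^ 2)) := by
    rw [integral_sub (hF ω) ((hp₀.add (hp₁.mul_const _)).add (hp₂.mul_const _)),
      integral_add (hp₀.add (hp₁.mul_const _)) (hp₂.mul_const _),
      integral_add hp₀ (hp₁.mul_const _),
      intervalIntegral.integral_mul_const, intervalIntegral.integral_mul_const]
  rw [hsplit, norm_pow, Real.norm_eq_abs, mul_right_comm]
  exact norm_integral_le_of_norm_le_const fun φ hφ => hC φ (Set.uIoc_subset_uIcc hφ) ω hω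

theorem integral_div_two_pi_pow (q : ℕ) :
    ∫ φ in (0 : ℝ)..π, (φ / (2 * π)) ^ q = π / (2 ^ q * (q + 1)) := by
  rw [intervalIntegral.integral_comp_div (fun x => x ^ q) (by positivity), integral_pow]
  have : π / (2 * π) = 1 / 2 := by field_simp
  rw [this, zero_div, zero_pow q.succ_ne_zero, sub_zero, smul_eq_mul, div_pow, one_pow, pow_succ]
  field_simp

theorem hasSecondOrderExpansion_moment {N C : ℝ} {𝓔 : ℝ → ℝ → ℂ} {m₂ : ℝ → ℝ}
    (hInt : ∀ ω, IntervalIntegrable (fun φ => 𝓔 φ ω) volume 0 π)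
    (hm₂Int : IntervalIntegrable m₂ volume 0 π)
    (hC : ∀ φ ∈ Set.Icc (0 : ℝ) π, ∀ ω : ℝ, |ω| ≤ 1 →
      ‖𝓔 φ ω - (1 + I * ω * ((N * φ / (2 * π) : ℝ) : ℂ) - ((ω ^ 2 / 2 : ℝ) : ℂ) * (m₂ φ : ℂ))‖
        ≤ C * |ω| ^ 3)
    (q : ℕ) :
    HasSecondOrderExpansion
      (fun ω => ((N / (2 * π) : ℝ) : ℂ) * ∫ φ in (0 : ℝ)..π, ((φ / (2 * π) : ℝ) : ℂ) ^ q * 𝓔 φ ω)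
      (N / (2 ^ (q + 1) * (q + 1))) (I * (N ^ 2 / (2 ^ (q + 2) * (q + 2))))
      (-(N / (4 * π) * ∫ φ in (0 : ℝ)..π, (φ / (2 * π)) ^ q * m₂ φ : ℝ)) := by
  set w : ℝ → ℂ := fun φ => ((φ / (2 * π) : ℝ) : ℂ) ^ q
  have hw : Continuous w := by fun_prop
  have hw_le_one : ∀ φ ∈ Set.Icc 0 π, ‖w φ‖ ≤ 1 := fun φ hφ => by
    rw [norm_pow, Complex.norm_real, Real.norm_eq_abs]
    have h2π : (0 : ℝ) < 2 * π := by positivity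
    rw [abs_of_nonneg (div_nonneg hφ.1 h2π.le)]
    exact pow_le_one₀ (div_nonneg hφ.1 h2π.le) ((div_le_one h2π).mpr (by linarith [hφ.2, pi_pos]))
  have hm₂C : IntervalIntegrable (fun φ => (m₂ φ : ℂ)) volume 0 π :=
    ⟨hm₂Int.1.ofReal, hm₂Int.2.ofReal⟩
  have hexpansion := hasSecondOrderExpansion_intervalIntegral (C := C)
    (F := fun φ ω => w φ * 𝓔 φ ω) (p₀ := w) (p₁ := fun φ => w φ * (I * ((N * φ / (2 * π) : ℝ) : ℂ)))
    (p₂ := fun φ => w φ * m₂ φ * (-1 / 2))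
    (fun ω => (hInt ω).continuousOn_mul hw.continuousOn) (hw.intervalIntegrable _ _)
    ((by fun_prop : Continuous _).intervalIntegrable _ _)
    ((hm₂C.continuousOn_mul hw.continuousOn).mul_const _) ?_
  · refine (hexpansion.const_mul _).congr (fun ω => rfl) ?_ ?_ ?_
    · simp only [w, ← Complex.ofReal_pow, intervalIntegral.integral_ofReal,
        integral_div_two_pi_pow]
      push_cast
      field_simp
      ring
    · have hp₁ : (fun φ => w φ * (I * ((N * φ / (2 * π) : ℝ) : ℂ)))
          = fun φ => I * N * (((φ / (2 * π)) ^ (q + 1) : ℝ) : ℂ) := by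
        funext φ; simp only [w]; push_cast; ring
      rw [hp₁, intervalIntegral.integral_const_mul, intervalIntegral.integral_ofReal,
        integral_div_two_pi_pow]
      push_cast
      field_simp
      ring
    · have hp₂ : (fun φ => w φ * m₂ φ * (-1 / 2))
          = fun φ => (-1 / 2 : ℂ) * (((φ / (2 * π)) ^ q * m₂ φ : ℝ) : ℂ) := by
        funext φ; simp only [w]; push_cast; ring
      rw [hp₂, intervalIntegral.integral_const_mul, intervalIntegral.integral_ofReal]
      push_cast
      ring
  · intro φ hφ ω hω
    rw [Set.uIcc_of_le pi_pos.le] at hφ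
    calc ‖w φ * 𝓔 φ ω - (w φ + w φ * (I * ((N * φ / (2 * π) : ℝ) : ℂ)) * ω
          + w φ * m₂ φ * (-1 / 2) * (ω : ℂ) ^ 2)‖
        = ‖w φ‖ * ‖𝓔 φ ω - (1 + I * ω * ((N * φ / (2 * π) : ℝ) : ℂ)
          - ((ω ^ 2 / 2 : ℝ) : ℂ) * (m₂ φ : ℂ))‖ := by
          rw [← norm_mul]; push_cast; ring_nf
      _ ≤ C * |ω| ^ 3 :=
        (mul_le_of_le_one_left (norm_nonneg _) (hw_le_one φ hφ)).trans (hC φ hφ ω hω)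

/- From `1 - e^{iz} = -2i sin(z/2) e^{iz/2}`; where `sin(z/2) = 0` both sides are `0`,
since `x / 0 = 0`. -/
theorem two_mul_exp_div_one_sub_exp_sq (z : ℂ) :
    2 * exp (I * z) / (1 - exp (I * z)) ^ 2 = -1 / (2 * Complex.sin (z / 2) ^ 2) := by
  set u := exp (z / 2 * I)
  have hu : u ≠ 0 := Complex.exp_ne_zero _
  have hz : exp (I * z) = u ^ 2 := by rw [← Complex.exp_nat_mul]; ring_nf
  have hsin : Complex.sin (z / 2) = (u⁻¹ - u) * I / 2 := by
    rw [Complex.sin, show -(z / 2) * I = -(z / 2 * I) by ring, Complex.exp_neg]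
  rw [hz, hsin]
  field_simp
  ring_nf
  rw [Complex.I_sq]
  ring

theorem tendsto_sq_mul_re_two_mul_exp_div_one_sub_exp_sq :
    Tendsto (fun ω : ℝ => ω ^ 2 * (2 * exp (I * ω) / (1 - exp (I * ω)) ^ 2).re)
      (𝓝[≠] 0) (𝓝 (-2)) := by
  have hsinc : Tendsto (fun ω : ℝ => -2 * (sinc (ω / 2) ^ 2)⁻¹) (𝓝 0) (𝓝 (-2)) := by
    simpa using ((((continuous_sinc.comp (continuous_id.div_const 2)).tendsto 0).pow 2).inv₀
      (by simp)).const_mul (-2)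
  refine (hsinc.mono_left nhdsWithin_le_nhds).congr' ?_
  filter_upwards [self_mem_nhdsWithin] with ω (hω : ω ≠ 0)
  have hre : (-1 / (2 * Complex.sin (ω / 2) ^ 2)).re = -1 / (2 * Real.sin (ω / 2) ^ 2) := by
    rw [← Complex.ofReal_ofNat, ← Complex.ofReal_div, ← Complex.ofReal_sin]
    norm_cast
  rw [two_mul_exp_div_one_sub_exp_sq, hre, sinc_of_ne_zero (by positivity), div_pow, inv_div]
  ring

/- With `z = e^{iω}`, `S_N(ω) = Re (2z/(1-z)²) * powerSpectrumBracket N I₀ I₁ ω`. -/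
noncomputable def powerSpectrumBracket (N : ℕ) (I₀ I₁ : ℝ → ℂ) (ω : ℝ) : ℝ :=
  -(I₀ ω - (1 - Complex.exp (-I * N * ω)) * I₁ ω).re
    + (2 / N) * ((Complex.exp (-I * N * ω / 2) * I₀ ω).re) ^ 2

theorem hasSecondOrderExpansion_powerSpectrumBracket {N : ℕ} (hN : N ≠ 0) {I₀ I₁ : ℝ → ℂ}
    {a : ℝ} {c : ℂ} (h₀ : HasSecondOrderExpansion I₀ (N / 2) (I * (N ^ 2 / 8)) (-a))
    (h₁ : HasSecondOrderExpansion I₁ (N / 8) (I * (N ^ 2 / 24)) c) :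
    HasSecondOrderExpansion (fun ω => (powerSpectrumBracket N I₀ I₁ ω : ℂ)) 0 0
      ((N ^ 3 / 48 - a : ℝ) : ℂ) := by
  have hT : HasSecondOrderExpansion (fun ω => I₀ ω - (1 - Complex.exp (-I * N * ω)) * I₁ ω)
      (N / 2) 0 (-a - N ^ 3 / 48) :=
    (h₀.sub (((hasSecondOrderExpansion_const 1).sub (hasSecondOrderExpansion_exp _)).mul h₁)).congr
      (fun _ => rfl) (by ring) (by ring) (by linear_combination (N ^ 3 / 48 : ℂ) * I_sq)
  have hz : HasSecondOrderExpansion (fun ω => Complex.exp (-I * N * ω / 2))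
      1 (-I * N / 2) (-(N ^ 2 / 8)) :=
    (hasSecondOrderExpansion_exp (-I * N / 2)).congr (fun ω => by ring_nf) rfl rfl
      (by linear_combination (N ^ 2 / 8 : ℂ) * I_sq)
  have hE : HasSecondOrderExpansion (fun ω => Complex.exp (-I * N * ω / 2) * I₀ ω)
      (N / 2) (-I * (N ^ 2 / 8)) (-a) :=
    (hz.mul h₀).congr (fun _ => rfl) (by ring) (by ring)
      (by linear_combination (-(N ^ 3 / 16) : ℂ) * I_sq)
  refine (hT.ofReal_re.neg.add ((hE.ofReal_re.mul hE.ofReal_re).const_mul (2 / N))).congr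
    (fun ω => by simp only [powerSpectrumBracket]; push_cast; ring) ?_ ?_ ?_
  · simp only [Complex.div_ofNat_re, Complex.natCast_re]
    push_cast
    field_simp
    ring
  · simp [pow_two]
  · simp [pow_two]
    field_simp
    rw [← Nat.cast_pow, Complex.natCast_re]
    push_cast
    ring

theorem power_spectrum_zero_limit_general (N : ℕ) (hN : 1 ≤ N)
    (𝓔 : ℝ → ℝ → ℂ) (m₂ : ℝ → ℝ)
    (hInt : ∀ ω : ℝ, IntervalIntegrable (fun φ => 𝓔 φ ω) MeasureTheory.volume 0 π)
    (hm₂Int : IntervalIntegrable m₂ MeasureTheory.volume 0 π)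
    (hunif : ∃ C : ℝ, ∀ φ ∈ Set.Icc (0 : ℝ) π, ∀ ω : ℝ, |ω| ≤ 1 →
      ‖𝓔 φ ω - (1 + Complex.I * ω * (((N : ℝ) * φ / (2 * π) : ℝ) : ℂ)
          - ((ω ^ 2 / 2 : ℝ) : ℂ) * (m₂ φ : ℂ))‖ ≤ C * |ω| ^ 3)
    (I : ℕ → ℝ → ℂ)
    (hI : ∀ q : ℕ, ∀ ω : ℝ,
      I q ω = ((N : ℝ) / (2 * π) : ℝ) * ∫ φ in (0 : ℝ)..π, ((φ / (2 * π) : ℝ) : ℂ) ^ q * 𝓔 φ ω)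
    (S : ℝ → ℝ)
    (hS : ∀ ω : ℝ,
      S ω = (2 * Complex.exp (Complex.I * ω) / (1 - Complex.exp (Complex.I * ω)) ^ 2).re
        * (-(I 0 ω - (1 - Complex.exp (-Complex.I * N * ω)) * I 1 ω).re
            + (2 / N) * ((Complex.exp (-Complex.I * N * ω / 2) * I 0 ω).re) ^ 2)) :
    Tendsto S (𝓝[≠] (0 : ℝ))
      (𝓝 ((N / (2 * π)) * ∫ φ in (0 : ℝ)..π, (m₂ φ - ((N : ℝ) * φ / (2 * π)) ^ 2))) := by
  obtain ⟨C, hC⟩ := hunif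
  have hmoment := hasSecondOrderExpansion_moment hInt hm₂Int hC
  have hI₀ : HasSecondOrderExpansion (I 0) (N / 2) (Complex.I * (N ^ 2 / 8))
      (-(N / (4 * π) * ∫ φ in (0 : ℝ)..π, m₂ φ : ℝ)) :=
    (hmoment 0).congr (fun ω => (hI 0 ω).symm) (by push_cast; ring) (by push_cast; ring)
      (by simp)
  have hI₁ : HasSecondOrderExpansion (I 1) (N / 8) (Complex.I * (N ^ 2 / 24)) _ :=
    (hmoment 1).congr (fun ω => (hI 1 ω).symm) (by push_cast; ring) (by push_cast; ring) rfl
  have hbracket := hasSecondOrderExpansion_powerSpectrumBracket (by omega) hI₀ hI₁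
  have hlim := hbracket.tendsto_re_div_sq.mul tendsto_sq_mul_re_two_mul_exp_div_one_sub_exp_sq
  have hsq : ∫ φ in (0 : ℝ)..π, ((N : ℝ) * φ / (2 * π)) ^ 2 = N ^ 2 * π / 12 := by
    simp_rw [mul_div_assoc, mul_pow, intervalIntegral.integral_const_mul, integral_div_two_pi_pow]
    ring
  convert hlim.congr' ?_ using 2
  · rw [intervalIntegral.integral_sub hm₂Int
      ((by fun_prop : Continuous fun φ : ℝ => ((N : ℝ) * φ / (2 * π)) ^ 2).intervalIntegrable _ _),
      hsq, Complex.ofReal_re]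
    field_simp
    ring
  · filter_upwards [self_mem_nhdsWithin] with ω (hω : ω ≠ 0)
    rw [hS, Complex.ofReal_re, powerSpectrumBracket]
    field_simp

/-- Small-`ω` limit of the Riser–Kanzieper power-spectrum formula.
Let `𝓔(φ;ω)` be the characteristic function of the counting statistic
`𝓝_{(0,φ)}` of a translation-invariant point process of `N` points on the
circle, so that uniformly in `φ ∈ [0,π]`,
`𝓔(φ;ω) = 1 + iω(Nφ/2π) - (ω²/2) m₂(φ) + O(ω³)` with `m₂(φ) ≥ (Nφ/2π)²`.
With `z = e^{iω}`, `I_q(ω) = (N/2π)∫₀^π (φ/2π)^q 𝓔(φ;ω) dφ` and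
`S_N(ω) = (2z/(1-z)²)(-Re(I₀ - (1-z^{-N})I₁) + (2/N)(Re(z^{-N/2} I₀))²)`,
one has `lim_{ω→0} S_N(ω) = (N/2π)∫₀^π (m₂(φ) - (Nφ/2π)²) dφ
  = (N/2π)∫₀^π Var 𝓝_{(0,φ)} dφ`. -/
theorem power_spectrum_zero_limit (N : ℕ) (hN : 1 ≤ N)
    (𝓔 : ℝ → ℝ → ℂ) (m₂ : ℝ → ℝ)
    (hInt : ∀ ω : ℝ, IntervalIntegrable (fun φ => 𝓔 φ ω) MeasureTheory.volume 0 π)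
    (hm₂Int : IntervalIntegrable m₂ MeasureTheory.volume 0 π)
    (hm₂ : ∀ φ ∈ Set.Icc (0 : ℝ) π, ((N : ℝ) * φ / (2 * π)) ^ 2 ≤ m₂ φ)
    (hunif : ∃ C : ℝ, ∀ φ ∈ Set.Icc (0 : ℝ) π, ∀ ω : ℝ, |ω| ≤ 1 →
      ‖𝓔 φ ω - (1 + Complex.I * ω * (((N : ℝ) * φ / (2 * π) : ℝ) : ℂ)
          - ((ω ^ 2 / 2 : ℝ) : ℂ) * (m₂ φ : ℂ))‖ ≤ C * |ω| ^ 3)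
    (I : ℕ → ℝ → ℂ)
    (hI : ∀ q : ℕ, ∀ ω : ℝ,
      I q ω = ((N : ℝ) / (2 * π) : ℝ) * ∫ φ in (0 : ℝ)..π, ((φ / (2 * π) : ℝ) : ℂ) ^ q * 𝓔 φ ω)
    (S : ℝ → ℝ)
    (hS : ∀ ω : ℝ,
      S ω = (2 * Complex.exp (Complex.I * ω) / (1 - Complex.exp (Complex.I * ω)) ^ 2).re
        * (-(I 0 ω - (1 - Complex.exp (-Complex.I * N * ω)) * I 1 ω).re
            + (2 / N) * ((Complex.exp (-Complex.I * N * ω / 2) * I 0 ω).re) ^ 2)) :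
    Tendsto S (𝓝[≠] (0 : ℝ))
      (𝓝 ((N / (2 * π)) * ∫ φ in (0 : ℝ)..π, (m₂ φ - ((N : ℝ) * φ / (2 * π)) ^ 2))) :=
  power_spectrum_zero_limit_general N hN 𝓔 m₂ hInt hm₂Int hunif I hI S hS
end
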